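/- arXiv:0707.0074 — 4 statements merged into one kernel-verified Lean document; each statement's English description precedes it below -/
import Mathlib

section
/- The operation H-tilde ⊗ I, where H-tilde is the toy Hadamard on R^4 and I is the 4×4 identity, maps the perfectly correlated two-toy-bit state Σ_i o_i ⊗ o_i to a vector that is not a valid epistemic state (not a nonnegative-integer combination of ontic basis vectors forming an epistemic state); hence H-tilde is validity-preserving but not completely validity-preserving. -/
/-! `H̃ = ½ J - P`, where `J` is the all-ones matrix and `P` swaps `o₁` and `o₄`. On a pure
state `v` (a two-element subset of the four ontic states) this gives `H̃ v = 𝟙 - P v`, the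
complement of a two-element subset, hence again a pure state. On the other hand
`(A ⊗ I) σ₀` lists the entries of `A`, and `H̃` has the entry `½ ∉ ℕ`. -/

open Kronecker

/-- `v` represents a pure epistemic state of a toy bit: a `{0,1}`-vector in `ℝ⁴`
with exactly two entries equal to 1. -/
def IsPureToyState (v : Fin 4 → ℝ) : Prop :=
  (∀ i, v i = 0 ∨ v i = 1) ∧ (Finset.univ.filter (fun i => v i = 1)).card = 2

/-- The toy Hadamard `H`-tilde. -/
noncomputable def HTilde : Matrix (Fin 4) (Fin 4) ℝ :=
  (1 / 2 : ℝ) • !![1, 1, 1, -1; 1, -1, 1, 1; 1, 1, -1, 1; -1, 1, 1, 1]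

/-- The perfectly correlated two-toy-bit state `σ₀ = Σᵢ oᵢ ⊗ oᵢ` in `ℝ⁴ ⊗ ℝ⁴ ≅ ℝ¹⁶`. -/
def corrState : Fin 4 × Fin 4 → ℝ := fun p => if p.1 = p.2 then 1 else 0

open Matrix

lemma sum_eq_two_of_isPureToyState {v : Fin 4 → ℝ} (hv : IsPureToyState v) :
    ∑ i, v i = 2 := by
  obtain ⟨h01, hcard⟩ := hv
  calc ∑ i, v i = ∑ i, if v i = 1 then (1 : ℝ) else 0 :=
        Finset.sum_congr rfl fun i _ => by rcases h01 i with h | h <;> simp [h]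
    _ = 2 := by rw [← Finset.natCast_card_filter, hcard]; norm_num

lemma isPureToyState_comp_perm {v : Fin 4 → ℝ} (hv : IsPureToyState v)
    (σ : Equiv.Perm (Fin 4)) : IsPureToyState (v ∘ σ) := by
  obtain ⟨h01, hcard⟩ := hv
  refine ⟨fun i => h01 (σ i), ?_⟩
  rw [← hcard]
  exact Finset.card_bij (fun i _ => σ i) (by simp) (by simp)
    (fun j hj => ⟨σ.symm j, by simpa using hj, by simp⟩)

lemma isPureToyState_one_sub {v : Fin 4 → ℝ} (hv : IsPureToyState v) :
    IsPureToyState (1 - v) := by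
  obtain ⟨h01, hcard⟩ := hv
  refine ⟨fun i => by rcases h01 i with h | h <;> simp [h], ?_⟩
  have hcompl : (Finset.univ.filter fun i => (1 - v) i = 1) =
      Finset.univ.filter fun i => ¬ v i = 1 :=
    Finset.filter_congr fun i _ => by rcases h01 i with h | h <;> simp [h]
  have hsplit := Finset.card_filter_add_card_filter_not (s := Finset.univ) (fun i => v i = 1)
  rw [hcard, Finset.card_univ, Fintype.card_fin] at hsplit
  rw [hcompl]
  omega

lemma HTilde_mulVec (v : Fin 4 → ℝ) :
    HTilde *ᵥ v = fun i => (∑ j, v j) / 2 - v (Equiv.swap 0 3 i) := by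
  ext i
  fin_cases i <;>
    simp [HTilde, mulVec, dotProduct, Fin.sum_univ_four, Equiv.swap_apply_of_ne_of_ne] <;> ring

lemma HTilde_mulVec_isPureToyState {v : Fin 4 → ℝ} (hv : IsPureToyState v) :
    IsPureToyState (HTilde *ᵥ v) := by
  rw [HTilde_mulVec, sum_eq_two_of_isPureToyState hv, div_self two_ne_zero]
  exact isPureToyState_one_sub (isPureToyState_comp_perm hv _)

lemma kronecker_one_mulVec_corrState {m : Type*} (A : Matrix m (Fin 4) ℝ) :
    (A ⊗ₖ (1 : Matrix (Fin 4) (Fin 4) ℝ)) *ᵥ corrState = fun p => A p.1 p.2 := by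
  ext ⟨i, j⟩
  simp [mulVec, dotProduct, Fintype.sum_prod_type, kroneckerMap_apply, one_apply, corrState]

/-- `H`-tilde `⊗ I` maps the perfectly correlated state `σ₀ = Σᵢ oᵢ ⊗ oᵢ` to a vector
that is not a nonnegative-integer combination of the ontic basis vectors, hence not a
valid epistemic state; so `H`-tilde, while validity-preserving on one toy bit, is not
completely validity-preserving. -/
theorem stmt_13 :
    (∀ v : Fin 4 → ℝ, IsPureToyState v → IsPureToyState (HTilde.mulVec v)) ∧
    ¬ ∃ f : Fin 4 × Fin 4 → ℕ,
        (HTilde ⊗ₖ (1 : Matrix (Fin 4) (Fin 4) ℝ)).mulVec corrState =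
          fun p => (f p : ℝ) := by
  refine ⟨fun v => HTilde_mulVec_isPureToyState, ?_⟩
  rintro ⟨f, hf⟩
  have hhalf : (f (0, 0) : ℝ) = 1 / 2 := by
    rw [← congrFun hf (0, 0), kronecker_one_mulVec_corrState]
    simp [HTilde]
  have htwice : ((2 * f (0, 0) : ℕ) : ℝ) = 1 := by push_cast; rw [hhalf]; norm_num
  have : 2 * f (0, 0) = 1 := by exact_mod_cast htwice
  omega
end

section
/- For any permutations P, Q ∈ S4 (as 4×4 permutation matrices) and the toy Hadamard H-tilde, the operation (P·H-tilde) ⊗ (Q·H-tilde) maps the correlated state Σ_i o_i ⊗ o_i to a valid pure epistemic state (a {0,1}-vector in R^16 with exactly four 1's). -/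
/-! The correlated state is the vectorisation of the identity matrix, and
`(A ⊗ B) *ᵥ vec X = vec (B X Aᵀ)`. Since `H̃` is orthogonal, `(P H̃) ⊗ (Q H̃)` therefore sends
`vec 1` to `vec (Q Pᵀ)`, the vectorisation of a permutation matrix: a `{0,1}`-vector with one
entry `1` per row. -/

open Kronecker

/-- The permutation matrix of `σ ∈ S₄`. -/
def permMat (σ : Equiv.Perm (Fin 4)) : Matrix (Fin 4) (Fin 4) ℝ :=
  fun i j => if i = σ j then 1 else 0

/-- `w` is a valid pure epistemic state of two toy bits: a `{0,1}`-vector in `ℝ¹⁶`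
with exactly four entries equal to 1. -/
def IsPureTwoToyState (w : Fin 4 × Fin 4 → ℝ) : Prop :=
  (∀ p, w p = 0 ∨ w p = 1) ∧ (Finset.univ.filter (fun p => w p = 1)).card = 4

open Matrix

theorem Matrix.mul_mul_transpose_cancel {m n R : Type*} [Fintype n] [DecidableEq n]
    [CommSemiring R] {A : Matrix n n R} (hA : A * Aᵀ = 1) (X Y : Matrix m n R) :
    X * A * (Y * A)ᵀ = X * Yᵀ := by
  rw [transpose_mul, Matrix.mul_assoc, ← Matrix.mul_assoc A, hA, Matrix.one_mul]

theorem Matrix.card_filter_vec_permMatrix_eq_one {n R : Type*} [Fintype n] [DecidableEq n]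
    [Zero R] [One R] [NeZero (1 : R)] [DecidableEq R] (σ : Equiv.Perm n) :
    (Finset.univ.filter fun p => vec (σ.permMatrix R) p = 1).card = Fintype.card n := by
  have graph : (Finset.univ.filter fun p => vec (σ.permMatrix R) p = 1) =
      Finset.univ.image fun j => (σ j, j) := by
    ext ⟨i, j⟩
    simp [Prod.ext_iff, eq_comm]
  rw [graph, Finset.card_image_of_injective _ fun _ _ h => (Prod.ext_iff.mp h).2,
    Finset.card_univ]

theorem permMat_eq_permMatrix (σ : Equiv.Perm (Fin 4)) : permMat σ = σ⁻¹.permMatrix ℝ := by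
  ext i j
  simp [permMat, Equiv.Perm.inv_def, Equiv.symm_apply_eq]

theorem HTilde_mul_transpose_self : HTilde * HTildeᵀ = 1 := by
  ext i j
  fin_cases i <;> fin_cases j <;> simp [HTilde, mul_apply, Fin.sum_univ_four] <;> norm_num

theorem corrState_eq_vec_one : corrState = vec (1 : Matrix (Fin 4) (Fin 4) ℝ) := by
  ext ⟨i, j⟩
  simp [corrState, one_apply, eq_comm]

theorem isPureTwoToyState_vec_permMatrix (σ : Equiv.Perm (Fin 4)) :
    IsPureTwoToyState (vec (σ.permMatrix ℝ)) := by
  refine ⟨fun p => ?_, card_filter_vec_permMatrix_eq_one σ⟩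
  by_cases h : σ p.2 = p.1 <;> simp [h]

/-- For any permutations `P, Q ∈ S₄` the operation `(P·H̃) ⊗ (Q·H̃)` maps the
correlated state `Σᵢ oᵢ ⊗ oᵢ` to a valid pure epistemic state of two toy bits. -/
theorem stmt_14 (P Q : Equiv.Perm (Fin 4)) :
    IsPureTwoToyState (((permMat P * HTilde) ⊗ₖ (permMat Q * HTilde)).mulVec corrState) := by
  rw [corrState_eq_vec_one, kronecker_mulVec_vec, Matrix.mul_one,
    mul_mul_transpose_cancel HTilde_mul_transpose_self, permMat_eq_permMatrix,
    permMat_eq_permMatrix, transpose_permMatrix, ← permMatrix_mul]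
  exact isPureTwoToyState_vec_permMatrix _
end

section
/- For any correlated two-toy-bit pure state σ = (I ⊗ P)σ0 with P ∈ S4, the state (H-tilde ⊗ I)σ equals (I ⊗ P)(H-tilde ⊗ I)σ0, and is an invalid epistemic state. -/
open Kronecker

lemma kronR (P : Equiv.Perm (Fin 4)) (v : Fin 4 × Fin 4 → ℝ) (i j : Fin 4) :
    (((1 : Matrix (Fin 4) (Fin 4) ℝ) ⊗ₖ permMat P).mulVec v) (i, j)
      = v (i, P.symm j) := by
  simp only [Matrix.mulVec, dotProduct, Fintype.sum_prod_type,
    Matrix.kroneckerMap_apply, Matrix.one_apply, permMat]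
  have hiff : ∀ l : Fin 4, (j = P l) ↔ (l = P.symm j) := by
    intro l; constructor <;> intro h <;> simp [h]
  simp only [hiff]
  simp [ite_mul, mul_ite]

lemma kronL (v : Fin 4 × Fin 4 → ℝ) (i j : Fin 4) :
    ((HTilde ⊗ₖ (1 : Matrix (Fin 4) (Fin 4) ℝ)).mulVec v) (i, j)
      = ∑ k, HTilde i k * v (k, j) := by
  simp only [Matrix.mulVec, dotProduct, Fintype.sum_prod_type,
    Matrix.kroneckerMap_apply, Matrix.one_apply]
  simp [mul_ite, ite_mul]

/-- For any correlated two-toy-bit pure state `σ = (I ⊗ P)σ₀` with `P ∈ S₄`, the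
state `(H̃ ⊗ I)σ` equals `(I ⊗ P)(H̃ ⊗ I)σ₀`, and it is an invalid epistemic state
(valid epistemic states, pure or mixed, are `{0,1}`-vectors). -/
theorem stmt_17 (P : Equiv.Perm (Fin 4)) :
    (HTilde ⊗ₖ (1 : Matrix (Fin 4) (Fin 4) ℝ)).mulVec
        (((1 : Matrix (Fin 4) (Fin 4) ℝ) ⊗ₖ permMat P).mulVec corrState) =
      ((1 : Matrix (Fin 4) (Fin 4) ℝ) ⊗ₖ permMat P).mulVec
        ((HTilde ⊗ₖ (1 : Matrix (Fin 4) (Fin 4) ℝ)).mulVec corrState) ∧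
    ¬ ∀ p, ((HTilde ⊗ₖ (1 : Matrix (Fin 4) (Fin 4) ℝ)).mulVec
        (((1 : Matrix (Fin 4) (Fin 4) ℝ) ⊗ₖ permMat P).mulVec corrState)) p = 0 ∨
      ((HTilde ⊗ₖ (1 : Matrix (Fin 4) (Fin 4) ℝ)).mulVec
        (((1 : Matrix (Fin 4) (Fin 4) ℝ) ⊗ₖ permMat P).mulVec corrState)) p = 1 := by
  have key : ∀ i j : Fin 4,
      ((HTilde ⊗ₖ (1 : Matrix (Fin 4) (Fin 4) ℝ)).mulVec
        (((1 : Matrix (Fin 4) (Fin 4) ℝ) ⊗ₖ permMat P).mulVec corrState)) (i, j)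
        = HTilde i (P.symm j) := by
    intro i j
    rw [kronL]
    have : ∀ k : Fin 4, (((1 : Matrix (Fin 4) (Fin 4) ℝ) ⊗ₖ permMat P).mulVec corrState) (k, j)
        = corrState (k, P.symm j) := fun k => kronR P corrState k j
    simp only [this, corrState]
    simp [mul_ite]
  constructor
  · funext p
    obtain ⟨i, j⟩ := p
    rw [key i j, kronR]
    rw [kronL]
    simp only [corrState]
    simp [mul_ite]
  · intro h
    have := h (0, P 0)
    rw [key 0 (P 0)] at this
    simp [HTilde] at this
end

section
/- A two-toy-bit epistemic state σ that is a pure uncorrelated state e_{ab} ⊗ e_{cd} remains a valid epistemic state under Δ ⊗ I for every validity-preserving single-bit operation Δ; consequently, a pure state σ is perfectly correlated if and only if there exists a validity-preserving single-bit map Δ with (Δ ⊗ I)σ invalid. -/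
open Kronecker

/-- The pure epistemic state `e_{ab} = o_a + o_b`. -/
noncomputable def e (a b : Fin 4) : Fin 4 → ℝ := Pi.single a 1 + Pi.single b 1

/-- A single-bit linear map is validity-preserving if it maps every pure epistemic
state to a pure epistemic state. -/
def ValidityPreserving (Δ : Matrix (Fin 4) (Fin 4) ℝ) : Prop :=
  ∀ v, IsPureToyState v → IsPureToyState (Δ.mulVec v)

lemma pure_e (a b : Fin 4) (hab : a ≠ b) : IsPureToyState (e a b) := by
  constructor
  · intro i
    simp only [e, Pi.add_apply, Pi.single_apply]
    rcases eq_or_ne i a with h1 | h1 <;> rcases eq_or_ne i b with h2 | h2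
    · exact absurd (h1 ▸ h2) hab
    · simp [h1, h2, hab, Ne.symm hab]
    · simp [h1, h2, hab, Ne.symm hab]
    · simp [h1, h2, hab, Ne.symm hab]
  · have : Finset.univ.filter (fun i => e a b i = 1) = {a, b} := by
      ext i
      simp only [Finset.mem_filter, Finset.mem_univ, true_and, Finset.mem_insert,
        Finset.mem_singleton, e, Pi.add_apply, Pi.single_apply]
      rcases eq_or_ne i a with h1 | h1 <;> rcases eq_or_ne i b with h2 | h2
      · exact absurd (h1 ▸ h2) hab
      all_goals simp [h1, h2, hab, Ne.symm hab]
    rw [this, Finset.card_pair hab]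

lemma pure_prod (v u : Fin 4 → ℝ) (hv : IsPureToyState v) (hu : IsPureToyState u) :
    IsPureTwoToyState (fun p => v p.1 * u p.2) := by
  constructor
  · intro p
    rcases hv.1 p.1 with h | h <;> rcases hu.1 p.2 with h' | h' <;> simp [h, h']
  · have : Finset.univ.filter (fun p : Fin 4 × Fin 4 => v p.1 * u p.2 = 1)
        = (Finset.univ.filter (fun i => v i = 1)) ×ˢ (Finset.univ.filter (fun j => u j = 1)) := by
      ext ⟨i, j⟩
      simp only [Finset.mem_filter, Finset.mem_univ, true_and, Finset.mem_product]
      rcases hv.1 i with h | h <;> rcases hu.1 j with h' | h' <;> simp [h, h']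
    rw [this, Finset.card_product, hv.2, hu.2]

lemma kron_mulVec (A : Matrix (Fin 4) (Fin 4) ℝ) (x : Fin 4 × Fin 4 → ℝ) (p : Fin 4 × Fin 4) :
    ((A ⊗ₖ (1 : Matrix (Fin 4) (Fin 4) ℝ)).mulVec x) p = ∑ k, A p.1 k * x (k, p.2) := by
  obtain ⟨i, j⟩ := p
  simp [Matrix.mulVec, dotProduct, Fintype.sum_prod_type, Matrix.one_apply,
    mul_ite, ite_mul, Finset.sum_ite_eq, mul_comm]

example : True := trivial

noncomputable def Delta0 : Matrix (Fin 4) (Fin 4) ℝ := fun i _ => if i = 0 ∨ i = 1 then 1/2 else 0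

lemma sum_pure (v : Fin 4 → ℝ) (hv : IsPureToyState v) : ∑ k, v k = 2 := by
  calc ∑ k, v k = ∑ k, if v k = 1 then (1:ℝ) else 0 :=
        Finset.sum_congr rfl fun k _ => by rcases hv.1 k with h | h <;> simp [h]
    _ = 2 := by rw [Finset.sum_boole, hv.2]; norm_num

lemma vp_Delta0 : ValidityPreserving Delta0 := by
  intro v hv
  have h2 : ∑ k, v k = 2 := sum_pure v hv
  have hfun : Delta0.mulVec v = e 0 1 := by
    funext i
    simp only [Delta0, Matrix.mulVec, dotProduct, ← Finset.mul_sum, h2, e,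
      Pi.add_apply, Pi.single_apply]
    fin_cases i <;> norm_num [Fin.ext_iff]
  rw [hfun]; exact pure_e 0 1 (by decide)

lemma sigma_corr (P : Equiv.Perm (Fin 4)) (k j : Fin 4) :
    (((1 : Matrix (Fin 4) (Fin 4) ℝ) ⊗ₖ permMat P).mulVec corrState) (k, j)
      = if j = P k then 1 else 0 := by
  have key : ∀ x : Fin 4, (if j = P x then if k = x then (1:ℝ) else 0 else 0)
      = if k = x then (if j = P x then (1:ℝ) else 0) else 0 := fun x => by
    rcases eq_or_ne k x with h | h <;> simp [h]
  simp only [Matrix.mulVec, dotProduct, Matrix.kroneckerMap_apply, Fintype.sum_prod_type,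
    Matrix.one_apply, permMat, corrState, mul_ite, ite_mul, one_mul, zero_mul, mul_one, mul_zero,
    Finset.sum_ite_eq, Finset.sum_ite_eq', Finset.mem_univ, if_true]
  simp only [key, Finset.sum_ite_eq, Finset.mem_univ, if_true]

lemma w00 (P : Equiv.Perm (Fin 4)) :
    ((Delta0 ⊗ₖ (1 : Matrix (Fin 4) (Fin 4) ℝ)).mulVec
      (((1 : Matrix (Fin 4) (Fin 4) ℝ) ⊗ₖ permMat P).mulVec corrState)) (0, 0) = 1/2 := by
  rw [kron_mulVec]
  have : ∀ k : Fin 4, Delta0 (0:Fin 4) k *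
      (((1 : Matrix (Fin 4) (Fin 4) ℝ) ⊗ₖ permMat P).mulVec corrState) (k, 0)
      = if P.symm 0 = k then 1/2 else 0 := by
    intro k
    rw [sigma_corr]
    have hiff : ((0:Fin 4) = P k) ↔ (P.symm 0 = k) := (Equiv.symm_apply_eq P).symm
    simp [Delta0, hiff, mul_ite]
  simp only [this, Finset.sum_ite_eq, Finset.mem_univ, if_true]

lemma part1 : ∀ Δ : Matrix (Fin 4) (Fin 4) ℝ, ValidityPreserving Δ →
    ∀ a b c d : Fin 4, a ≠ b → c ≠ d →
      IsPureTwoToyState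
        ((Δ ⊗ₖ (1 : Matrix (Fin 4) (Fin 4) ℝ)).mulVec (fun p => e a b p.1 * e c d p.2)) := by
  intro Δ hΔ a b c d hab hcd
  have hfun : ((Δ ⊗ₖ (1 : Matrix (Fin 4) (Fin 4) ℝ)).mulVec (fun p => e a b p.1 * e c d p.2))
      = fun p => (Δ.mulVec (e a b)) p.1 * e c d p.2 := by
    funext p
    rw [kron_mulVec]
    simp only [Matrix.mulVec, dotProduct, Finset.sum_mul]
    exact Finset.sum_congr rfl fun k _ => (mul_assoc _ _ _).symm
  rw [hfun]
  exact pure_prod _ _ (hΔ _ (pure_e a b hab)) (pure_e c d hcd)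

/-- A pure uncorrelated two-toy-bit state `e_{ab} ⊗ e_{cd}` remains a valid epistemic
state under `Δ ⊗ I` for every validity-preserving single-bit operation `Δ`;
consequently, a pure two-toy-bit state `σ` is perfectly correlated (of the form
`(I ⊗ P)σ₀`) if and only if some validity-preserving single-bit map `Δ` makes
`(Δ ⊗ I)σ` invalid. -/
theorem stmt_18 :
    (∀ Δ : Matrix (Fin 4) (Fin 4) ℝ, ValidityPreserving Δ →
      ∀ a b c d : Fin 4, a ≠ b → c ≠ d →
        IsPureTwoToyState
          ((Δ ⊗ₖ (1 : Matrix (Fin 4) (Fin 4) ℝ)).mulVec (fun p => e a b p.1 * e c d p.2))) ∧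
    ∀ σ : Fin 4 × Fin 4 → ℝ,
      ((∃ a b c d : Fin 4, a ≠ b ∧ c ≠ d ∧ σ = fun p => e a b p.1 * e c d p.2) ∨
        ∃ P : Equiv.Perm (Fin 4),
          σ = ((1 : Matrix (Fin 4) (Fin 4) ℝ) ⊗ₖ permMat P).mulVec corrState) →
      ((∃ P : Equiv.Perm (Fin 4),
          σ = ((1 : Matrix (Fin 4) (Fin 4) ℝ) ⊗ₖ permMat P).mulVec corrState) ↔
        ∃ Δ : Matrix (Fin 4) (Fin 4) ℝ, ValidityPreserving Δ ∧
          ¬ IsPureTwoToyState ((Δ ⊗ₖ (1 : Matrix (Fin 4) (Fin 4) ℝ)).mulVec σ)) := by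
  refine ⟨part1, fun σ hσ => ⟨?_, ?_⟩⟩
  · rintro ⟨P, rfl⟩
    refine ⟨Delta0, vp_Delta0, fun hp => ?_⟩
    have h := hp.1 (0, 0)
    rw [w00 P] at h
    norm_num at h
  · rintro ⟨Δ, hΔ, hn⟩
    rcases hσ with ⟨a, b, c, d, hab, hcd, rfl⟩ | h
    · exact absurd (part1 Δ hΔ a b c d hab hcd) hn
    · exact h
end
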